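/- Let S(G) = ⟨Ḡ, T⟩ be the splinter group inside G ≀_ℝ T as above, where T is a simple group acting on ℝ containing elements mapping [1/2,1) onto [1/4,1) and onto [1/4,1/2) respectively. If T is simple (and nontrivial), then S(G) is a perfect group, i.e. equal to its own commutator subgroup. -/

import Mathlib

/-- The automorphism of the function group `ℝ → G` induced by `f : T`. -/
noncomputable def wreathAut {G T : Type*} [Group G] [Group T] [MulAction T ℝ] (f : T) :
    MulAut (ℝ → G) where
  toFun h := fun s => h (f⁻¹ • s)
  invFun h := fun s => h (f • s)
  left_inv h := by funext s; simp
  right_inv h := by funext s; simp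
  map_mul' h₁ h₂ := rfl

/-- The action of `T` on `ℝ → G` as a homomorphism to automorphisms. -/
noncomputable def wreathAct (G T : Type*) [Group G] [Group T] [MulAction T ℝ] :
    T →* MulAut (ℝ → G) where
  toFun := wreathAut
  map_one' := by
    ext h s
    simp [wreathAut]
  map_mul' f₁ f₂ := by
    ext h s
    simp [wreathAut, mul_smul]

/-- The function taking value `g` on `[1/2, 1)` and `1` elsewhere. -/
noncomputable def gbar {G : Type*} [Group G] (g : G) : ℝ → G :=
  fun s => if s ∈ Set.Ico (1/2 : ℝ) 1 then g else 1

/-!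
The `T`-part of `S(G)` lies in `⁅S, S⁆` because `T` is simple and, by the two given
elements (which cannot commute), nonabelian, hence perfect. For the `Ḡ`-part write
`A = [1/2, 1)` and `B = [1/4, 1/2)`: conjugating `ḡ` by `f₁` and `f₂` gives the functions
equal to `g` on `B ∪ A` and on `B` respectively, so `ḡ = (f₂ ḡ⁻¹ f₂⁻¹) (f₁ ḡ f₁⁻¹)`, which is
a product of two commutators of elements of `S`.
-/

open scoped Pointwise commutatorElement

theorem not_commute_of_smul_set_eq_union {T α : Type*} [Group T] [MulAction T α]
    {A B : Set α} (hAB : Disjoint A B) (hB : B.Nonempty) {f₁ f₂ : T}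
    (h₁ : f₁ • A = B ∪ A) (h₂ : f₂ • A = B) : ¬Commute f₁ f₂ := by
  intro hc
  have hB_sub : B ⊆ f₁ • B := by
    have h : f₁ • B = f₂ • B ∪ B :=
      calc f₁ • B = (f₁ * f₂) • A := by rw [mul_smul, h₂]
        _ = (f₂ * f₁) • A := by rw [hc.eq]
        _ = f₂ • B ∪ B := by rw [mul_smul, h₁, Set.smul_set_union, h₂]
    exact h ▸ Set.subset_union_right
  have hdisj : Disjoint (f₁ • A) (f₁ • B) := Set.disjoint_smul_set.mpr hAB
  rw [h₁] at hdisj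
  obtain ⟨b, hb⟩ := hB
  exact Set.disjoint_left.mp hdisj (Or.inl hb) (hB_sub hb)

theorem IsSimpleGroup.commutator_eq_top_of_not_commute {T : Type*} [Group T] [IsSimpleGroup T]
    {a b : T} (h : ¬Commute a b) : ⁅(⊤ : Subgroup T), (⊤ : Subgroup T)⁆ = ⊤ := by
  refine (Subgroup.commutator_normal ⊤ ⊤).eq_bot_or_eq_top.resolve_left fun hbot => h ?_
  have hab := Subgroup.commutator_mem_commutator (Subgroup.mem_top a) (Subgroup.mem_top b)
  rw [hbot, Subgroup.mem_bot] at hab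
  exact commutatorElement_eq_one_iff_commute.mp hab

namespace SemidirectProduct

variable {N G : Type*} [Group N] [Group G] {φ : G →* MulAut N} {H : Subgroup (N ⋊[φ] G)}

theorem inl_mul_mem_commutator {n : N} {g₁ g₂ : G} (hn : inl n ∈ H) (hg₁ : inr g₁ ∈ H)
    (hg₂ : inr g₂ ∈ H) : inl (φ g₂ n⁻¹ * φ g₁ n) ∈ ⁅H, H⁆ := by
  have h : (inl (φ g₂ n⁻¹ * φ g₁ n) : N ⋊[φ] G) =
      ⁅(inr g₂ : N ⋊[φ] G), (inl n)⁻¹⁆ * ⁅(inl n : N ⋊[φ] G)⁻¹, inr g₁⁆ := by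
    simp only [commutatorElement_def, map_mul, inl_aut, map_inv]
    group
  rw [h]
  exact mul_mem (Subgroup.commutator_mem_commutator hg₂ (inv_mem hn))
    (Subgroup.commutator_mem_commutator (inv_mem hn) hg₁)

theorem inr_mem_commutator (hG : ⁅(⊤ : Subgroup G), (⊤ : Subgroup G)⁆ = ⊤) (hH : ∀ g, inr g ∈ H) (g : G) :
    inr g ∈ ⁅H, H⁆ := by
  have hinr : (⊤ : Subgroup G).map inr ≤ H := Subgroup.map_le_iff_le_comap.mpr fun g _ => hH g
  have h : (⊤ : Subgroup G).map inr ≤ ⁅H, H⁆ := by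
    rw [← hG, Subgroup.map_commutator]
    exact Subgroup.commutator_mono hinr hinr
  exact h ⟨g, Subgroup.mem_top g, rfl⟩

end SemidirectProduct

section Wreath

variable {G T : Type*} [Group G] [Group T] [MulAction T ℝ]

theorem wreathAct_mulIndicator (f : T) (A : Set ℝ) (g : G) :
    wreathAct G T f (A.mulIndicator fun _ => g) = (f • A).mulIndicator fun _ => g := by
  funext s
  change A.mulIndicator (fun _ => g) (f⁻¹ • s) = _
  classical
  simp only [Set.mulIndicator_apply, Set.mem_smul_set_iff_inv_smul_mem]

theorem wreathAct_inv_mulIndicator_mul {A B : Set ℝ} (hAB : Disjoint A B) {f₁ f₂ : T}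
    (h₁ : f₁ • A = B ∪ A) (h₂ : f₂ • A = B) (g : G) :
    wreathAct G T f₂ (A.mulIndicator fun _ => g)⁻¹ * wreathAct G T f₁ (A.mulIndicator fun _ => g)
      = A.mulIndicator fun _ => g := by
  rw [map_inv, wreathAct_mulIndicator, wreathAct_mulIndicator, h₁, h₂,
    Set.mulIndicator_union_of_disjoint hAB.symm]
  funext s
  simp

theorem gbar_eq_mulIndicator (g : G) : gbar g = (Set.Ico (1/2 : ℝ) 1).mulIndicator fun _ => g := by
  funext s
  simp only [gbar, Set.mulIndicator_apply]

end Wreath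

open SemidirectProduct in
theorem stmt11 {G T : Type*} [Group G] [Group T] [MulAction T ℝ]
    [IsSimpleGroup T] (f₁ f₂ : T)
    (h₁ : (fun s => f₁ • s) '' Set.Ico (1/2 : ℝ) 1 = Set.Ico (1/4 : ℝ) 1)
    (h₂ : (fun s => f₂ • s) '' Set.Ico (1/2 : ℝ) 1 = Set.Ico (1/4 : ℝ) (1/2)) :
    let S : Subgroup ((ℝ → G) ⋊[wreathAct G T] T) :=
      Subgroup.closure
        ((Set.range fun g : G => (inl (gbar g) : (ℝ → G) ⋊[wreathAct G T] T)) ∪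
          Set.range inr)
    ⁅S, S⁆ = S := by
  intro S
  have hdisj : Disjoint (Set.Ico (1/2 : ℝ) 1) (Set.Ico (1/4) (1/2)) :=
    Set.Ico_disjoint_Ico.mpr (by norm_num)
  have hf₁ : f₁ • Set.Ico (1/2 : ℝ) 1 = Set.Ico (1/4) (1/2) ∪ Set.Ico (1/2) 1 := by
    rw [← Set.image_smul, h₁, Set.Ico_union_Ico_eq_Ico (by norm_num) (by norm_num)]
  have hinl (g : G) : inl (gbar g) ∈ S := Subgroup.subset_closure (Or.inl ⟨g, rfl⟩)
  have hinr (t : T) : inr t ∈ S := Subgroup.subset_closure (Or.inr ⟨t, rfl⟩)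
  refine le_antisymm (Subgroup.commutator_le_self S) ((Subgroup.closure_le _).mpr ?_)
  rintro _ (⟨g, rfl⟩ | ⟨t, rfl⟩)
  · show inl (gbar g) ∈ ⁅S, S⁆
    have hinl' := hinl g
    rw [gbar_eq_mulIndicator] at hinl' ⊢
    rw [← wreathAct_inv_mulIndicator_mul hdisj hf₁ h₂]
    exact inl_mul_mem_commutator hinl' (hinr f₁) (hinr f₂)
  · have hT := IsSimpleGroup.commutator_eq_top_of_not_commute
      (not_commute_of_smul_set_eq_union hdisj ⟨1/4, by norm_num⟩ hf₁ h₂)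
    exact inr_mem_commutator hT hinr t
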